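/- arXiv:1806.09550 — 6 statements merged into one kernel-verified Lean document; each statement's English description precedes it below -/
import Mathlib

section
/- Let X be a metric space with its Borel σ-algebra and let γ be a finite Borel measure on X. Let L ≥ 1 and, for each ℓ ∈ {1,…,L}, let I_ℓ be a finite index set and {A_{ℓ,i}}_{i∈I_ℓ} a measurable partition of X (the sets are pairwise disjoint and their union is X). For each R ∈ ℕ, each ℓ, and each i ∈ I_ℓ, let μ^R_{ℓ,i} be a finite Borel measure on X, and let k^R_ℓ ≥ 0 be combination weights with Σ_{ℓ=1}^L k^R_ℓ > 0 for every R. Suppose there is a nonempty subset L₀ ⊆ {1,…,L} such that: (a) for each ℓ ∈ L₀ and i ∈ I_ℓ, μ^R_{ℓ,i} converges weakly to γ|_{A_{ℓ,i}} as R → ∞; (b) for each ℓ ∈ L₀, k^R_ℓ → ∞ as R → ∞; (c) for each ℓ ∉ L₀, sup_R k^R_ℓ < ∞ and sup_{R, i∈I_ℓ} μ^R_{ℓ,i}(X) < ∞. Then the combined measure μ̂^R := (Σ_{ℓ=1}^L k^R_ℓ)⁻¹ · Σ_{ℓ=1}^L k^R_ℓ · Σ_{i∈I_ℓ} μ^R_{ℓ,i}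 converges weakly to γ as R → ∞. -/
open MeasureTheory Filter Topology
open scoped NNReal ENNReal BoundedContinuousFunction

/-! Integrating a bounded continuous `f` against the combined measure gives the weighted average,
with weights `k R ℓ / ∑ k R`, of the integrals of `f` against `∑ i, μ R ℓ i`. For `ℓ ∈ L₀` these
integrals tend to `∫ f ∂γ`, since the sets `A ℓ i` partition `X`; for `ℓ ∉ L₀` they stay bounded
while their weights tend to `0`, because the total weight tends to infinity. -/

/-- Weak convergence of a sequence of (finite Borel) measures: convergence of integrals of
all bounded continuous real-valued functions. -/
def WeakConv {X : Type*} [MeasurableSpace X] [TopologicalSpace X]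
    (μ : ℕ → Measure X) (ν : Measure X) : Prop :=
  ∀ f : X →ᵇ ℝ,
    Tendsto (fun n => ∫ x, f x ∂(μ n)) atTop (𝓝 (∫ x, f x ∂ν))

section WeightedAverage

variable {ι : Type*} [Fintype ι] {k : ℕ → ι → ℝ}

lemma tendsto_inv_sum_mul_of_isBoundedUnder (hs : Tendsto (fun R => ∑ ℓ, k R ℓ) atTop atTop)
    {ℓ : ι} (hk : IsBoundedUnder (· ≤ ·) atTop (fun R => ‖k R ℓ‖)) :
    Tendsto (fun R => (∑ ℓ, k R ℓ)⁻¹ * k R ℓ) atTop (𝓝 0) :=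
  (tendsto_inv_atTop_zero.comp hs).zero_mul_isBoundedUnder_le hk

lemma norm_inv_sum_mul_le_one (hk0 : ∀ R ℓ, 0 ≤ k R ℓ) (R : ℕ) (ℓ : ι) :
    ‖(∑ ℓ, k R ℓ)⁻¹ * k R ℓ‖ ≤ 1 := by
  rw [Real.norm_of_nonneg (mul_nonneg (inv_nonneg.2 (Finset.sum_nonneg fun ℓ _ => hk0 R ℓ))
    (hk0 R ℓ))]
  exact inv_mul_le_one_of_le₀ (Finset.single_le_sum (fun ℓ _ => hk0 R ℓ) (Finset.mem_univ ℓ))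
    (Finset.sum_nonneg fun ℓ _ => hk0 R ℓ)

theorem tendsto_weighted_average {a : ℕ → ι → ℝ} {I : ℝ} {L₀ : Set ι}
    (hk0 : ∀ R ℓ, 0 ≤ k R ℓ) (hs : Tendsto (fun R => ∑ ℓ, k R ℓ) atTop atTop)
    (ha : ∀ ℓ ∈ L₀, Tendsto (fun R => a R ℓ) atTop (𝓝 I))
    (hk : ∀ ℓ ∉ L₀, IsBoundedUnder (· ≤ ·) atTop (fun R => ‖k R ℓ‖))
    (ha' : ∀ ℓ ∉ L₀, IsBoundedUnder (· ≤ ·) atTop (fun R => ‖a R ℓ‖)) :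
    Tendsto (fun R => (∑ ℓ, k R ℓ)⁻¹ * ∑ ℓ, k R ℓ * a R ℓ) atTop (𝓝 I) := by
  have hterm : ∀ ℓ, Tendsto (fun R => (∑ ℓ, k R ℓ)⁻¹ * k R ℓ * (a R ℓ - I)) atTop (𝓝 0) := by
    intro ℓ
    by_cases hℓ : ℓ ∈ L₀
    · exact isBoundedUnder_le_mul_tendsto_zero
        (isBoundedUnder_of ⟨1, fun R => norm_inv_sum_mul_le_one hk0 R ℓ⟩)
        (tendsto_sub_nhds_zero_iff.2 (ha ℓ hℓ))
    · obtain ⟨C, hC⟩ := ha' ℓ hℓ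
      exact (tendsto_inv_sum_mul_of_isBoundedUnder hs (hk ℓ hℓ)).zero_mul_isBoundedUnder_le
        ⟨C + ‖I‖, eventually_map.2 <| (eventually_map.1 hC).mono fun R hR =>
          (norm_sub_le _ _).trans (add_le_add_left hR _)⟩
  have hsum := (tendsto_finsetSum Finset.univ fun ℓ _ => hterm ℓ).add_const I
  rw [Finset.sum_const_zero, zero_add] at hsum
  refine hsum.congr' ?_
  filter_upwards [hs.eventually_gt_atTop 0] with R hR
  simp only [mul_sub, Finset.sum_sub_distrib, ← Finset.sum_mul, ← Finset.mul_sum, mul_assoc]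
  rw [← mul_assoc, inv_mul_cancel₀ hR.ne']
  ring

end WeightedAverage

section Measures

variable {X : Type*} [MeasurableSpace X]

lemma integral_finsetSum_smul_measure {ι : Type*} (s : Finset ι) {ν : ι → Measure X} {g : X → ℝ}
    (hg : ∀ ℓ ∈ s, Integrable g (ν ℓ)) (k : ι → ℝ≥0) :
    ∫ x, g x ∂(∑ ℓ ∈ s, k ℓ • ν ℓ) = ∑ ℓ ∈ s, k ℓ * ∫ x, g x ∂ν ℓ := by
  rw [integral_finsetSum_measure fun ℓ hℓ => (hg ℓ hℓ).smul_measure_nnreal]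
  simp only [integral_smul_nnreal_measure, NNReal.smul_def, smul_eq_mul]

lemma MeasureTheory.Measure.sum_restrict_eq_self_of_iUnion_eq_univ {ι : Type*} [Fintype ι]
    (γ : Measure X) {A : ι → Set X} (hAmeas : ∀ i, MeasurableSet (A i))
    (hAdisj : Pairwise fun i j => Disjoint (A i) (A j)) (hAcover : ⋃ i, A i = Set.univ) :
    ∑ i, γ.restrict (A i) = γ := by
  rw [← Measure.sum_fintype, ← Measure.restrict_iUnion hAdisj hAmeas, hAcover,
    Measure.restrict_univ]

variable [TopologicalSpace X] [OpensMeasurableSpace X]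

theorem WeakConv.finsetSum {ι : Type*} [Fintype ι] {μ : ℕ → ι → Measure X}
    {ν : ι → Measure X} [∀ R i, IsFiniteMeasure (μ R i)] [∀ i, IsFiniteMeasure (ν i)]
    (h : ∀ i, WeakConv (fun R => μ R i) (ν i)) :
    WeakConv (fun R => ∑ i, μ R i) (∑ i, ν i) := by
  intro f
  simp only [integral_finsetSum_measure fun i _ => f.integrable _]
  exact tendsto_finsetSum _ fun i _ => h i f

lemma isBoundedUnder_norm_integral {μ : ℕ → Measure X} [∀ R, IsFiniteMeasure (μ R)] {C : ℝ≥0}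
    (hC : ∀ R, μ R Set.univ ≤ C) (f : X →ᵇ ℝ) :
    IsBoundedUnder (· ≤ ·) atTop (fun R => ‖∫ x, f x ∂μ R‖) := by
  refine isBoundedUnder_of ⟨C * ‖f‖, fun R => (f.norm_integral_le_mul_norm _).trans ?_⟩
  gcongr
  exact ENNReal.toReal_le_of_le_ofReal C.coe_nonneg (by simpa using hC R)

end Measures

theorem combined_estimator_weak_convergence_general
    {X : Type*} [MetricSpace X] [MeasurableSpace X] [BorelSpace X]
    (γ : Measure X) [IsFiniteMeasure γ]
    (L : ℕ)
    (ι : Fin L → Type*) [∀ ℓ, Fintype (ι ℓ)]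
    (A : ∀ ℓ : Fin L, ι ℓ → Set X)
    (hAmeas : ∀ ℓ i, MeasurableSet (A ℓ i))
    (hAdisj : ∀ ℓ, Pairwise fun i j => Disjoint (A ℓ i) (A ℓ j))
    (hAcover : ∀ ℓ, (⋃ i, A ℓ i) = Set.univ)
    (μ : ℕ → ∀ ℓ : Fin L, ι ℓ → Measure X)
    (hμfin : ∀ R ℓ i, IsFiniteMeasure (μ R ℓ i))
    (k : ℕ → Fin L → ℝ≥0)
    (L₀ : Set (Fin L)) (hL₀ : L₀.Nonempty)
    (ha : ∀ ℓ ∈ L₀, ∀ i, WeakConv (fun R => μ R ℓ i) (γ.restrict (A ℓ i)))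
    (hb : ∀ ℓ ∈ L₀, Tendsto (fun R => k R ℓ) atTop atTop)
    (hc₁ : ∀ ℓ ∉ L₀, ∃ C : ℝ≥0, ∀ R, k R ℓ ≤ C)
    (hc₂ : ∀ ℓ ∉ L₀, ∃ C : ℝ≥0, ∀ R (i : ι ℓ), μ R ℓ i Set.univ ≤ (C : ℝ≥0∞)) :
    WeakConv (fun R => (∑ ℓ, k R ℓ)⁻¹ • ∑ ℓ, k R ℓ • ∑ i, μ R ℓ i) γ := by
  intro f
  have hconv : ∀ ℓ ∈ L₀, WeakConv (fun R => ∑ i, μ R ℓ i) γ := fun ℓ hℓ => by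
    simpa only [Measure.sum_restrict_eq_self_of_iUnion_eq_univ γ (hAmeas ℓ) (hAdisj ℓ)
      (hAcover ℓ)] using WeakConv.finsetSum (ha ℓ hℓ)
  have hbdd : ∀ ℓ ∉ L₀, IsBoundedUnder (· ≤ ·) atTop (fun R => ‖∫ x, f x ∂∑ i, μ R ℓ i‖) := by
    intro ℓ hℓ
    obtain ⟨C, hC⟩ := hc₂ ℓ hℓ
    refine isBoundedUnder_norm_integral (C := Fintype.card (ι ℓ) * C) (fun R => ?_) f
    calc (∑ i, μ R ℓ i) Set.univ = ∑ i, μ R ℓ i Set.univ := by simp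
      _ ≤ ∑ _i : ι ℓ, (C : ℝ≥0∞) := Finset.sum_le_sum fun i _ => hC R i
      _ = ↑(Fintype.card (ι ℓ) * C) := by simp
  have hs : Tendsto (fun R => ∑ ℓ, (k R ℓ : ℝ)) atTop atTop := by
    obtain ⟨ℓ₀, hℓ₀⟩ := hL₀
    refine tendsto_atTop_mono (fun R => ?_) (NNReal.tendsto_coe_atTop.2 (hb ℓ₀ hℓ₀))
    exact Finset.single_le_sum (fun ℓ _ => (k R ℓ).coe_nonneg) (Finset.mem_univ ℓ₀)
  simp only [integral_smul_nnreal_measure, integral_finsetSum_smul_measure _ fun ℓ _ => f.integrable _,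
    NNReal.smul_def, NNReal.coe_inv, NNReal.coe_sum, smul_eq_mul]
  refine tendsto_weighted_average (fun R ℓ => (k R ℓ).coe_nonneg) hs (fun ℓ hℓ => hconv ℓ hℓ f)
    (fun ℓ hℓ => ?_) hbdd
  obtain ⟨C, hC⟩ := hc₁ ℓ hℓ
  exact isBoundedUnder_of ⟨C, fun R => by simpa using hC R⟩

theorem combined_estimator_weak_convergence
    {X : Type*} [MetricSpace X] [MeasurableSpace X] [BorelSpace X]
    (γ : Measure X) [IsFiniteMeasure γ]
    (L : ℕ) (hL : 1 ≤ L)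
    (ι : Fin L → Type*) [∀ ℓ, Fintype (ι ℓ)]
    (A : ∀ ℓ : Fin L, ι ℓ → Set X)
    (hAmeas : ∀ ℓ i, MeasurableSet (A ℓ i))
    (hAdisj : ∀ ℓ, Pairwise fun i j => Disjoint (A ℓ i) (A ℓ j))
    (hAcover : ∀ ℓ, (⋃ i, A ℓ i) = Set.univ)
    (μ : ℕ → ∀ ℓ : Fin L, ι ℓ → Measure X)
    (hμfin : ∀ R ℓ i, IsFiniteMeasure (μ R ℓ i))
    (k : ℕ → Fin L → ℝ≥0)
    (hkpos : ∀ R, 0 < ∑ ℓ, k R ℓ)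
    (L₀ : Set (Fin L)) (hL₀ : L₀.Nonempty)
    (ha : ∀ ℓ ∈ L₀, ∀ i, WeakConv (fun R => μ R ℓ i) (γ.restrict (A ℓ i)))
    (hb : ∀ ℓ ∈ L₀, Tendsto (fun R => k R ℓ) atTop atTop)
    (hc₁ : ∀ ℓ ∉ L₀, ∃ C : ℝ≥0, ∀ R, k R ℓ ≤ C)
    (hc₂ : ∀ ℓ ∉ L₀, ∃ C : ℝ≥0, ∀ R (i : ι ℓ), μ R ℓ i Set.univ ≤ (C : ℝ≥0∞)) :
    WeakConv (fun R => (∑ ℓ, k R ℓ)⁻¹ • ∑ ℓ, k R ℓ • ∑ i, μ R ℓ i) γ :=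
  combined_estimator_weak_convergence_general γ L ι A hAmeas hAdisj hAcover μ hμfin k L₀ hL₀ ha hb
    hc₁ hc₂
end

section
/- Let X be a metric space with its Borel σ-algebra and let γ be a finite Borel measure on X with γ(X) > 0. Under the hypotheses of the combined-estimator convergence lemma — namely: finite index sets I_ℓ for ℓ ∈ {1,…,L}, measurable partitions {A_{ℓ,i}}_{i∈I_ℓ} of X, finite measures μ^R_{ℓ,i} on X, combination weights k^R_ℓ ≥ 0 with Σ_ℓ k^R_ℓ > 0, and a nonempty L₀ ⊆ {1,…,L} such that for ℓ ∈ L₀ every μ^R_{ℓ,i} converges weakly to γ|_{A_{ℓ,i}} and k^R_ℓ → ∞, while for ℓ ∉ L₀ both k^R_ℓ and μ^R_{ℓ,i}(X) stay bounded in R — define the combined measure μ̂^R := (Σ_ℓ k^R_ℓ)⁻¹ Σ_ℓ k^R_ℓ Σ_{i∈I_ℓ} μ^R_{ℓ,i} and the combined normalization estimate ω̂^R := μ̂^R(X). Then ω̂^R → γ(X) as R → ∞, and the self-normalized measures (ω̂^R)⁻¹ · μ̂^R converge weakly to (γ(X))⁻¹ · γ. -/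
open MeasureTheory Filter Topology
open scoped NNReal ENNReal BoundedContinuousFunction

/-!
The combined measure is a convex combination, with weights `k_ℓ / Σ k`, of the level measures
`Σᵢ μ_{ℓ,i}`. For `ℓ ∈ L₀` the level measure converges weakly to `γ`, because the sets `A_{ℓ,i}`
partition `X`. For `ℓ ∉ L₀` the weight tends to `0`, since `Σ k → ∞` while `k_ℓ` stays bounded,
and the integrals of a bounded function against the level measure stay bounded. So the combined
measure converges weakly to `γ`; testing against `1` gives `ω̂ → γ(X)`, and as `γ(X)` is positive
and finite, dividing by the total mass passes to the limit.
-/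

theorem tendsto_weighted_mean {ι : Type*} [Fintype ι] {w a : ℕ → ι → ℝ} {I : ℝ} (S : Set ι)
    (hw : ∀ n i, 0 ≤ w n i) (htot : Tendsto (fun n => ∑ i, w n i) atTop atTop)
    (hS : ∀ i ∈ S, Tendsto (fun n => a n i) atTop (𝓝 I))
    (hw_bdd : ∀ i ∉ S, ∃ C, ∀ n, w n i ≤ C) (ha_bdd : ∀ i ∉ S, ∃ M, ∀ n, |a n i| ≤ M) :
    Tendsto (fun n => (∑ i, w n i)⁻¹ * ∑ i, w n i * a n i) atTop (𝓝 I) := by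
  set s := fun n => ∑ i, w n i
  have hws : ∀ n i, w n i ≤ s n := fun n i =>
    Finset.single_le_sum (fun j _ => hw n j) (Finset.mem_univ i)
  have hweight_nonneg : ∀ n i, 0 ≤ w n i / s n := fun n i =>
    div_nonneg (hw n i) ((hw n i).trans (hws n i))
  have hterm : ∀ i, Tendsto (fun n => w n i / s n * (a n i - I)) atTop (𝓝 0) := by
    intro i
    by_cases hi : i ∈ S
    · refine isBoundedUnder_le_mul_tendsto_zero (isBoundedUnder_of ⟨1, fun n => ?_⟩) ?_
      · rw [Function.comp_apply, Real.norm_of_nonneg (hweight_nonneg n i)]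
        exact div_le_one_of_le₀ (hws n i) ((hw n i).trans (hws n i))
      · simpa using (hS i hi).sub_const I
    · obtain ⟨C, hC⟩ := hw_bdd i hi
      obtain ⟨M, hM⟩ := ha_bdd i hi
      have hweight : Tendsto (fun n => w n i / s n) atTop (𝓝 0) :=
        squeeze_zero' (.of_forall fun n => hweight_nonneg n i)
          ((htot.eventually_gt_atTop 0).mono fun n hn => by gcongr; exact hC n)
          (tendsto_const_nhds.div_atTop htot)
      refine hweight.zero_mul_isBoundedUnder_le (isBoundedUnder_of ⟨M + |I|, fun n => ?_⟩)
      simpa using (abs_sub (a n i) I).trans (add_le_add_left (hM n) _)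
  have hrep : ∀ᶠ n in atTop,
      I + ∑ i, w n i / s n * (a n i - I) = (s n)⁻¹ * ∑ i, w n i * a n i := by
    filter_upwards [htot.eventually_gt_atTop 0] with n hn
    calc I + ∑ i, w n i / s n * (a n i - I)
        = I + ((s n)⁻¹ * ∑ i, w n i * a n i - s n / s n * I) := by
          rw [Finset.mul_sum, Finset.sum_div, Finset.sum_mul, ← Finset.sum_sub_distrib]
          congr 2 with i
          ring
      _ = (s n)⁻¹ * ∑ i, w n i * a n i := by rw [div_self hn.ne']; ring
  simpa using ((tendsto_finsetSum _ fun i _ => hterm i).const_add I).congr' hrep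

namespace MeasureTheory.Measure

variable {X ι : Type*} [MeasurableSpace X]

theorem sum_restrict_of_partition [Fintype ι] (μ : Measure X) {A : ι → Set X}
    (hA : ∀ i, MeasurableSet (A i)) (hdisj : Pairwise fun i j => Disjoint (A i) (A j))
    (hcover : ⋃ i, A i = Set.univ) :
    ∑ i, μ.restrict (A i) = μ := by
  rw [← sum_fintype, ← restrict_iUnion hdisj hA, hcover, restrict_univ]

noncomputable def weightedMean [Fintype ι] (k : ι → ℝ≥0) (ν : ι → Measure X) : Measure X :=
  (∑ i, k i)⁻¹ • ∑ i, k i • ν i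

instance [Fintype ι] (k : ι → ℝ≥0) (ν : ι → Measure X) [∀ i, IsFiniteMeasure (ν i)] :
    IsFiniteMeasure (weightedMean k ν) := by
  unfold weightedMean
  infer_instance

theorem integral_weightedMean [Fintype ι] {E : Type*} [NormedAddCommGroup E] [NormedSpace ℝ E]
    (k : ι → ℝ≥0) (ν : ι → Measure X) {f : X → E} (hf : ∀ i, Integrable f (ν i)) :
    ∫ x, f x ∂(weightedMean k ν) = (∑ i, (k i : ℝ))⁻¹ • ∑ i, (k i : ℝ) • ∫ x, f x ∂(ν i) := by
  rw [weightedMean, integral_smul_nnreal_measure,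
    integral_finsetSum_measure fun i _ => (hf i).smul_measure_nnreal]
  simp only [integral_smul_nnreal_measure, NNReal.coe_inv, NNReal.coe_sum, NNReal.smul_def]

end MeasureTheory.Measure

namespace WeakConv

variable {X : Type*} [MeasurableSpace X] [TopologicalSpace X] {μ : ℕ → Measure X} {ν : Measure X}

theorem finsetSum_s1 [OpensMeasurableSpace X] {ι : Type*} {s : Finset ι} {μ : ℕ → ι → Measure X}
    {ν : ι → Measure X} [∀ n i, IsFiniteMeasure (μ n i)] [∀ i, IsFiniteMeasure (ν i)]
    (h : ∀ i ∈ s, WeakConv (fun n => μ n i) (ν i)) :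
    WeakConv (fun n => ∑ i ∈ s, μ n i) (∑ i ∈ s, ν i) := fun f => by
  simp only [integral_finsetSum_measure fun i _ => f.integrable _]
  exact tendsto_finsetSum s fun i hi => h i hi f

theorem tendsto_measure_univ [∀ n, IsFiniteMeasure (μ n)] [IsFiniteMeasure ν]
    (h : WeakConv μ ν) : Tendsto (fun n => μ n Set.univ) atTop (𝓝 (ν Set.univ)) := by
  have h1 := h (BoundedContinuousFunction.const X 1)
  simp only [BoundedContinuousFunction.const_apply, integral_const, smul_eq_mul, mul_one] at h1
  exact (ENNReal.tendsto_toReal_iff (fun n => measure_ne_top _ _) (measure_ne_top _ _)).mp h1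

theorem smul {c : ℕ → ℝ≥0∞} {c₀ : ℝ≥0∞} (h : WeakConv μ ν) (hc : Tendsto c atTop (𝓝 c₀))
    (hc₀ : c₀ ≠ ∞) : WeakConv (fun n => c n • μ n) (c₀ • ν) := fun f => by
  simp only [integral_smul_measure, smul_eq_mul]
  exact ((ENNReal.tendsto_toReal hc₀).comp hc).mul (h f)

theorem weightedMean [OpensMeasurableSpace X] {ι : Type*} [Fintype ι] {ν : ℕ → ι → Measure X}
    [∀ n i, IsFiniteMeasure (ν n i)] {γ : Measure X} {k : ℕ → ι → ℝ≥0} (S : Set ι)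
    (htot : Tendsto (fun n => ∑ i, k n i) atTop atTop)
    (hS : ∀ i ∈ S, WeakConv (fun n => ν n i) γ)
    (hk_bdd : ∀ i ∉ S, ∃ C : ℝ≥0, ∀ n, k n i ≤ C)
    (hν_bdd : ∀ i ∉ S, ∃ C : ℝ≥0, ∀ n, ν n i Set.univ ≤ C) :
    WeakConv (fun n => Measure.weightedMean (k n) (ν n)) γ := fun f => by
  simp only [Measure.integral_weightedMean _ _ fun i => f.integrable _, smul_eq_mul]
  refine tendsto_weighted_mean S (fun _ _ => NNReal.coe_nonneg _) ?_ (fun i hi => hS i hi f)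
    (fun i hi => ?_) (fun i hi => ?_)
  · simpa only [NNReal.coe_sum] using NNReal.tendsto_coe_atTop.mpr htot
  · obtain ⟨C, hC⟩ := hk_bdd i hi
    exact ⟨C, fun n => hC n⟩
  · obtain ⟨C, hC⟩ := hν_bdd i hi
    refine ⟨C * ‖f‖, fun n => (f.norm_integral_le_mul_norm _).trans ?_⟩
    gcongr
    exact ENNReal.toReal_le_coe_of_le_coe (hC n)

end WeakConv

theorem combined_estimator_self_normalized_convergence_general
    {X : Type*} [MetricSpace X] [MeasurableSpace X] [BorelSpace X]
    (γ : Measure X) [IsFiniteMeasure γ] (hγpos : 0 < γ Set.univ)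
    (L : ℕ)
    (ι : Fin L → Type*) [∀ ℓ, Fintype (ι ℓ)]
    (A : ∀ ℓ : Fin L, ι ℓ → Set X)
    (hAmeas : ∀ ℓ i, MeasurableSet (A ℓ i))
    (hAdisj : ∀ ℓ, Pairwise fun i j => Disjoint (A ℓ i) (A ℓ j))
    (hAcover : ∀ ℓ, (⋃ i, A ℓ i) = Set.univ)
    (μ : ℕ → ∀ ℓ : Fin L, ι ℓ → Measure X)
    (hμfin : ∀ R ℓ i, IsFiniteMeasure (μ R ℓ i))
    (k : ℕ → Fin L → ℝ≥0)
    (L₀ : Set (Fin L)) (hL₀ : L₀.Nonempty)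
    (ha : ∀ ℓ ∈ L₀, ∀ i, WeakConv (fun R => μ R ℓ i) (γ.restrict (A ℓ i)))
    (hb : ∀ ℓ ∈ L₀, Tendsto (fun R => k R ℓ) atTop atTop)
    (hc₁ : ∀ ℓ ∉ L₀, ∃ C : ℝ≥0, ∀ R, k R ℓ ≤ C)
    (hc₂ : ∀ ℓ ∉ L₀, ∃ C : ℝ≥0, ∀ R (i : ι ℓ), μ R ℓ i Set.univ ≤ (C : ℝ≥0∞))
    (μhat : ℕ → Measure X)
    (hμhat : ∀ R, μhat R = (∑ ℓ, k R ℓ)⁻¹ • ∑ ℓ, k R ℓ • ∑ i, μ R ℓ i) :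
    Tendsto (fun R => μhat R Set.univ) atTop (𝓝 (γ Set.univ)) ∧
    WeakConv (fun R => (μhat R Set.univ)⁻¹ • μhat R) ((γ Set.univ)⁻¹ • γ) := by
  have hsum_conv : ∀ ℓ ∈ L₀, WeakConv (fun R => ∑ i, μ R ℓ i) γ := fun ℓ hℓ => by
    rw [← Measure.sum_restrict_of_partition γ (hAmeas ℓ) (hAdisj ℓ) (hAcover ℓ)]
    exact WeakConv.finsetSum_s1 fun i _ => ha ℓ hℓ i
  have hsum_bdd : ∀ ℓ ∉ L₀, ∃ C : ℝ≥0, ∀ R, (∑ i, μ R ℓ i) Set.univ ≤ C := fun ℓ hℓ => by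
    obtain ⟨C, hC⟩ := hc₂ ℓ hℓ
    refine ⟨Fintype.card (ι ℓ) * C, fun R => ?_⟩
    rw [Measure.finsetSum_apply]
    refine (Finset.sum_le_card_nsmul _ _ _ fun i _ => hC R i).trans_eq ?_
    simp [nsmul_eq_mul]
  obtain ⟨ℓ₀, hℓ₀⟩ := hL₀
  have htot : Tendsto (fun R => ∑ ℓ, k R ℓ) atTop atTop :=
    tendsto_atTop_mono (fun R => Finset.single_le_sum (fun _ _ => zero_le) (Finset.mem_univ ℓ₀))
      (hb ℓ₀ hℓ₀)
  obtain rfl : μhat = fun R => Measure.weightedMean (k R) fun ℓ => ∑ i, μ R ℓ i := funext hμhat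
  have hconv := WeakConv.weightedMean L₀ htot hsum_conv hc₁ hsum_bdd
  have hmass := hconv.tendsto_measure_univ
  exact ⟨hmass, hconv.smul hmass.inv (ENNReal.inv_ne_top.mpr hγpos.ne')⟩

theorem combined_estimator_self_normalized_convergence
    {X : Type*} [MetricSpace X] [MeasurableSpace X] [BorelSpace X]
    (γ : Measure X) [IsFiniteMeasure γ] (hγpos : 0 < γ Set.univ)
    (L : ℕ) (hL : 1 ≤ L)
    (ι : Fin L → Type*) [∀ ℓ, Fintype (ι ℓ)]
    (A : ∀ ℓ : Fin L, ι ℓ → Set X)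
    (hAmeas : ∀ ℓ i, MeasurableSet (A ℓ i))
    (hAdisj : ∀ ℓ, Pairwise fun i j => Disjoint (A ℓ i) (A ℓ j))
    (hAcover : ∀ ℓ, (⋃ i, A ℓ i) = Set.univ)
    (μ : ℕ → ∀ ℓ : Fin L, ι ℓ → Measure X)
    (hμfin : ∀ R ℓ i, IsFiniteMeasure (μ R ℓ i))
    (k : ℕ → Fin L → ℝ≥0)
    (hkpos : ∀ R, 0 < ∑ ℓ, k R ℓ)
    (L₀ : Set (Fin L)) (hL₀ : L₀.Nonempty)
    (ha : ∀ ℓ ∈ L₀, ∀ i, WeakConv (fun R => μ R ℓ i) (γ.restrict (A ℓ i)))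
    (hb : ∀ ℓ ∈ L₀, Tendsto (fun R => k R ℓ) atTop atTop)
    (hc₁ : ∀ ℓ ∉ L₀, ∃ C : ℝ≥0, ∀ R, k R ℓ ≤ C)
    (hc₂ : ∀ ℓ ∉ L₀, ∃ C : ℝ≥0, ∀ R (i : ι ℓ), μ R ℓ i Set.univ ≤ (C : ℝ≥0∞))
    (μhat : ℕ → Measure X)
    (hμhat : ∀ R, μhat R = (∑ ℓ, k R ℓ)⁻¹ • ∑ ℓ, k R ℓ • ∑ i, μ R ℓ i) :
    Tendsto (fun R => μhat R Set.univ) atTop (𝓝 (γ Set.univ)) ∧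
    WeakConv (fun R => (μhat R Set.univ)⁻¹ • μhat R) ((γ Set.univ)⁻¹ • γ) :=
  combined_estimator_self_normalized_convergence_general γ hγpos L ι A hAmeas hAdisj hAcover μ hμfin
    k L₀ hL₀ ha hb hc₁ hc₂ μhat hμhat
end

section
/- Let X be a metric space with its Borel σ-algebra and γ a finite Borel measure on X with γ(X) > 0. Let T be a finite binary tree whose nodes j are labeled with Borel sets A_j ⊆ X such that the root node 0 satisfies A_0 = X and every internal node j with children ℓ_j and r_j satisfies A_j = A_{ℓ_j} ∪ A_{r_j} with A_{ℓ_j} ∩ A_{r_j} = ∅. For each node j and each n ∈ ℕ let γ̃^n_j be a finite Borel measure on X (the local estimate) and c^n_j ∈ [0,1], with c^n_j = 0 whenever j is a leaf, and define recursively γ̂^n_j := γ̃^n_j for leaves and γ̂^n_j := (1 − c^n_j)·γ̃^n_j + c^n_j·(γ̂^n_{ℓ_j} + γ̂^n_{r_j}) for internal nodes. Suppose: for every leaf j, γ̃^n_j converges weakly to γ|_{A_j} as n → ∞; and for every internal node j, c^n_j → 1 and sup_n γ̃^n_j(X) < ∞. Then for every node j of the tree, γ̂^n_j converges weakly to γ|_{A_j};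 in particular the root estimate γ̂^n_0 converges weakly to γ, and the self-normalized root measures (γ̂^n_0(X))⁻¹ · γ̂^n_0 converge weakly to (γ(X))⁻¹ · γ. -/
open MeasureTheory Filter Topology
open scoped NNReal ENNReal BoundedContinuousFunction

/-- A finite binary inference tree: each node is labeled with a region `A ⊆ X`, a sequence of
local estimates (finite measures) and, for internal nodes, a sequence of child preference
factors `c n ∈ [0,1]` (leaves have `c = 0`, i.e. no child preference factor). -/
inductive ITree (X : Type*) [MeasurableSpace X] where
  | leaf (A : Set X) (est : ℕ → MeasureTheory.Measure X) : ITree X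
  | node (A : Set X) (est : ℕ → MeasureTheory.Measure X) (c : ℕ → ℝ≥0)
      (l r : ITree X) : ITree X

namespace ITree

variable {X : Type*} [MeasurableSpace X] [TopologicalSpace X]

/-- The region associated with a node. -/
def region : ITree X → Set X
  | leaf A _ => A
  | node A _ _ _ _ => A

/-- The combined inference-tree estimator `γ̂^n` at a node: for a leaf it is just the local
estimate; for an internal node it combines the local estimate with the sum of the children's
combined estimates using the child preference factor. -/
noncomputable def estimate : ITree X → ℕ → MeasureTheory.Measure X
  | leaf _ est, n => est n
  | node _ est c l r, n => (1 - c n) • est n + c n • (l.estimate n + r.estimate n)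

/-- Well-formedness and convergence hypotheses: regions are measurable, a parent's region is
the disjoint union of its children's regions, every leaf's local estimate converges weakly to
`γ` restricted to its region, and at every internal node the local estimates are finite
measures of uniformly bounded mass and `c n ∈ [0,1]` with `c n → 1`. -/
def Valid (γ : MeasureTheory.Measure X) : ITree X → Prop
  | leaf A est => MeasurableSet A ∧ (∀ n, IsFiniteMeasure (est n)) ∧
      WeakConv est (γ.restrict A)
  | node A est c l r => MeasurableSet A ∧
      l.region ∪ r.region = A ∧ Disjoint l.region r.region ∧
      (∀ n, IsFiniteMeasure (est n)) ∧
      (∃ C : ℝ≥0, ∀ n, est n Set.univ ≤ (C : ℝ≥0∞)) ∧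
      (∀ n, c n ≤ 1) ∧ Tendsto c atTop (𝓝 1) ∧
      Valid γ l ∧ Valid γ r

/-- `s.IsSubtree t` holds when `s` is (the subtree rooted at) a node of `t`. -/
inductive IsSubtree : ITree X → ITree X → Prop
  | refl (t : ITree X) : IsSubtree t t
  | left {s l r : ITree X} (A : Set X) (est : ℕ → MeasureTheory.Measure X) (c : ℕ → ℝ≥0) :
      IsSubtree s l → IsSubtree s (node A est c l r)
  | right {s l r : ITree X} (A : Set X) (est : ℕ → MeasureTheory.Measure X) (c : ℕ → ℝ≥0) :
      IsSubtree s r → IsSubtree s (node A est c l r)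

end ITree

/-! At an internal node the local estimate is weighted by `1 - c n → 0` against a uniformly
bounded mass, so it vanishes in the limit, while the children's estimates are weighted by
`c n → 1`; by induction they converge to `γ` restricted to the two halves of the node's region,
whose sum is `γ` restricted to the region itself. At the root, testing against the constant `1`
gives convergence of the total masses, hence of the normalized measures. -/

section WeakConv

variable {X : Type*} [MeasurableSpace X] [TopologicalSpace X]

lemma WeakConv.tendsto_measureReal_univ {μ : ℕ → Measure X} {ν : Measure X}
    (h : WeakConv μ ν) :
    Tendsto (fun n => (μ n).real Set.univ) atTop (𝓝 (ν.real Set.univ)) := by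
  simpa [integral_const] using h 1

lemma WeakConv.inv_mass_smul {μ : ℕ → Measure X} {ν : Measure X} [IsFiniteMeasure ν]
    (hν : ν Set.univ ≠ 0) (h : WeakConv μ ν) :
    WeakConv (fun n => (μ n Set.univ)⁻¹ • μ n) ((ν Set.univ)⁻¹ • ν) := by
  have hmass : ν.real Set.univ ≠ 0 := (ENNReal.toReal_pos hν (measure_ne_top ν _)).ne'
  intro f
  simp only [integral_smul_measure, ENNReal.toReal_inv, smul_eq_mul, ← measureReal_def]
  exact (h.tendsto_measureReal_univ.inv₀ hmass).mul (h f)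

lemma WeakConv.smul_s3 {μ : ℕ → Measure X} {ν : Measure X} {a : ℕ → ℝ≥0} {b : ℝ≥0}
    (ha : Tendsto a atTop (𝓝 b)) (h : WeakConv μ ν) :
    WeakConv (fun n => a n • μ n) (b • ν) := by
  intro f
  simp only [integral_smul_nnreal_measure, NNReal.smul_def, smul_eq_mul]
  exact (NNReal.tendsto_coe.mpr ha).mul (h f)

variable [OpensMeasurableSpace X]

lemma WeakConv.add {μ μ' : ℕ → Measure X} {ν ν' : Measure X}
    [∀ n, IsFiniteMeasure (μ n)] [∀ n, IsFiniteMeasure (μ' n)]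
    [IsFiniteMeasure ν] [IsFiniteMeasure ν'] (h : WeakConv μ ν) (h' : WeakConv μ' ν') :
    WeakConv (fun n => μ n + μ' n) (ν + ν') := by
  intro f
  simp only [integral_add_measure (f.integrable _) (f.integrable _)]
  exact (h f).add (h' f)

lemma weakConv_smul_zero_of_tendsto_zero {μ : ℕ → Measure X} {a : ℕ → ℝ≥0} {C : ℝ≥0}
    (ha : Tendsto a atTop (𝓝 0)) (hC : ∀ n, μ n Set.univ ≤ C) :
    WeakConv (fun n => a n • μ n) 0 := by
  intro f
  have hfin (n : ℕ) : IsFiniteMeasure (μ n) := ⟨(hC n).trans_lt ENNReal.coe_lt_top⟩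
  have hbound (n : ℕ) : ‖∫ x, f x ∂(a n • μ n)‖ ≤ a n * (C * ‖f‖) := by
    rw [integral_smul_nnreal_measure, NNReal.smul_def, smul_eq_mul, norm_mul,
      Real.norm_of_nonneg (a n).coe_nonneg]
    gcongr
    calc ‖∫ x, f x ∂(μ n)‖ ≤ (μ n).real Set.univ * ‖f‖ := f.norm_integral_le_mul_norm _
      _ ≤ C * ‖f‖ := by
        gcongr
        exact ENNReal.toReal_le_coe_of_le_coe (hC n)
  have hlim : Tendsto (fun n => (a n : ℝ) * (C * ‖f‖)) atTop (𝓝 0) := by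
    simpa using (NNReal.tendsto_coe.mpr ha).mul_const ((C : ℝ) * ‖f‖)
  simpa using squeeze_zero_norm hbound hlim

end WeakConv

namespace ITree

variable {X : Type*} [MeasurableSpace X] [TopologicalSpace X] {γ : Measure X}

lemma Valid.measurableSet_region : ∀ {t : ITree X}, t.Valid γ → MeasurableSet t.region
  | leaf _ _, h => h.1
  | node _ _ _ _ _, h => h.1

lemma Valid.isFiniteMeasure_estimate :
    ∀ {t : ITree X}, t.Valid γ → ∀ n, IsFiniteMeasure (t.estimate n)
  | leaf _ _, h, n => h.2.1 n
  | node _ est c l r, ⟨_, _, _, hfin, _, _, _, hl, hr⟩, n => by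
      have := hfin n
      have := hl.isFiniteMeasure_estimate n
      have := hr.isFiniteMeasure_estimate n
      exact inferInstanceAs
        (IsFiniteMeasure ((1 - c n) • est n + c n • (l.estimate n + r.estimate n)))

lemma Valid.of_isSubtree {s t : ITree X} (h : s.IsSubtree t) (ht : t.Valid γ) : s.Valid γ := by
  induction h with
  | refl => exact ht
  | left _ _ _ _ ih => exact ih ht.2.2.2.2.2.2.2.1
  | right _ _ _ _ ih => exact ih ht.2.2.2.2.2.2.2.2

lemma Valid.weakConv_estimate [OpensMeasurableSpace X] [IsFiniteMeasure γ] :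
    ∀ {t : ITree X}, t.Valid γ → WeakConv t.estimate (γ.restrict t.region)
  | leaf _ _, h => h.2.2
  | node A est c l r, ⟨_, hunion, hdisj, hfin, ⟨C, hC⟩, _, hc, hl, hr⟩ => by
      have := hl.isFiniteMeasure_estimate
      have := hr.isFiniteMeasure_estimate
      have hc' : Tendsto (fun n => 1 - c n) atTop (𝓝 0) := by
        simpa using (tendsto_const_nhds (x := (1 : ℝ≥0))).sub hc
      have hlocal : WeakConv (fun n => (1 - c n) • est n) 0 :=
        weakConv_smul_zero_of_tendsto_zero hc' hC
      have hchildren := (hl.weakConv_estimate.add hr.weakConv_estimate).smul_s3 hc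
      have hsplit :
          γ.restrict A = 0 + (1 : ℝ≥0) • (γ.restrict l.region + γ.restrict r.region) := by
        rw [zero_add, one_smul, ← Measure.restrict_union hdisj hr.measurableSet_region, hunion]
      exact hsplit ▸ hlocal.add hchildren

end ITree

theorem inference_tree_consistency
    {X : Type*} [MetricSpace X] [MeasurableSpace X] [BorelSpace X]
    (γ : Measure X) [IsFiniteMeasure γ] (hγpos : 0 < γ Set.univ)
    (t : ITree X) (hvalid : t.Valid γ) (hroot : t.region = Set.univ) :
    (∀ s : ITree X, s.IsSubtree t → WeakConv s.estimate (γ.restrict s.region)) ∧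
    WeakConv t.estimate γ ∧
    WeakConv (fun n => (t.estimate n Set.univ)⁻¹ • t.estimate n) ((γ Set.univ)⁻¹ • γ) := by
  have hroot_conv : WeakConv t.estimate γ := by
    simpa [hroot] using hvalid.weakConv_estimate
  exact ⟨fun s hs => (hvalid.of_isSubtree hs).weakConv_estimate, hroot_conv,
    hroot_conv.inv_mass_smul hγpos.ne'⟩
end

section
/- Let Z and X be measurable spaces, g : Z → X measurable, u a measure on Z, λ a σ-finite measure on X, and q, h : X → [0,∞) measurable functions such that the pushforward measure g_*u equals λ.withDensity q and such that h(x) = 0 for λ-almost every x with q(x) = 0. Then g_*( u.withDensity( z ↦ h(g(z)) / q(g(z)) ) ) = λ.withDensity h; equivalently, for every bounded measurable f : X → ℝ, ∫_Z f(g(z)) · h(g(z)) / q(g(z)) du(z) = ∫_X f(x) h(x) dλ(x). -/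
open MeasureTheory Filter Topology
open scoped NNReal ENNReal

lemma map_withDensity_comp' {Z X : Type*} [MeasurableSpace Z] [MeasurableSpace X]
    (g : Z → X) (hg : Measurable g) (u : Measure Z) (φ : X → ℝ≥0∞) (hφ : Measurable φ) :
    Measure.map g (u.withDensity (φ ∘ g)) = (Measure.map g u).withDensity φ := by
  ext s hs
  rw [Measure.map_apply hg hs, withDensity_apply _ (hg hs), withDensity_apply _ hs]
  simp only [Function.comp_apply]
  rw [← setLIntegral_map hs hφ hg]

theorem importance_sampling_change_of_variables
    {Z X : Type*} [MeasurableSpace Z] [MeasurableSpace X]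
    (g : Z → X) (hg : Measurable g)
    (u : Measure Z) (lam : Measure X) [SigmaFinite lam]
    (q h : X → ℝ≥0) (hq : Measurable q) (hh : Measurable h)
    (hpush : Measure.map g u = lam.withDensity fun x => (q x : ℝ≥0∞))
    (hzero : ∀ᵐ x ∂lam, q x = 0 → h x = 0) :
    Measure.map g (u.withDensity fun z => ((h (g z) / q (g z) : ℝ≥0) : ℝ≥0∞))
      = lam.withDensity (fun x => (h x : ℝ≥0∞)) ∧
    ∀ f : X → ℝ, Measurable f → (∃ C : ℝ, ∀ x, |f x| ≤ C) →
      ∫ z, f (g z) * ((h (g z) / q (g z) : ℝ≥0) : ℝ) ∂u = ∫ x, f x * (h x : ℝ) ∂lam := by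
  have hφ : Measurable fun x => ((h x / q x : ℝ≥0) : ℝ≥0∞) :=
    ((hh.div hq)).coe_nnreal_ennreal
  have key : Measure.map g (u.withDensity fun z => ((h (g z) / q (g z) : ℝ≥0) : ℝ≥0∞))
      = lam.withDensity (fun x => (h x : ℝ≥0∞)) := by
    have := map_withDensity_comp' g hg u (fun x => ((h x / q x : ℝ≥0) : ℝ≥0∞)) hφ
    rw [show (fun z => ((h (g z) / q (g z) : ℝ≥0) : ℝ≥0∞))
        = (fun x => ((h x / q x : ℝ≥0) : ℝ≥0∞)) ∘ g from rfl, this, hpush,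
      ← withDensity_mul _ hq.coe_nnreal_ennreal hφ]
    refine withDensity_congr_ae ?_
    filter_upwards [hzero] with x hx
    by_cases hqx : q x = 0
    · simp [hqx, hx hqx]
    · simp only [Pi.mul_apply]
      rw [← ENNReal.coe_mul, mul_div_cancel₀ _ hqx]
  refine ⟨key, fun f hf _ => ?_⟩
  have h1 : ∫ z, f (g z) * ((h (g z) / q (g z) : ℝ≥0) : ℝ) ∂u
      = ∫ z, f (g z) ∂(u.withDensity fun z => ((h (g z) / q (g z) : ℝ≥0) : ℝ≥0∞)) := by
    rw [integral_withDensity_eq_integral_smul (show Measurable fun z => h (g z) / q (g z) from (hh.comp hg).div (hq.comp hg))]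
    simp [mul_comm, NNReal.smul_def]
  have h2 : ∫ z, f (g z) ∂(u.withDensity fun z => ((h (g z) / q (g z) : ℝ≥0) : ℝ≥0∞))
      = ∫ x, f x ∂(lam.withDensity (fun x => (h x : ℝ≥0∞))) := by
    rw [← key, integral_map hg.aemeasurable hf.aestronglyMeasurable]
  rw [h1, h2, integral_withDensity_eq_integral_smul hh]
  simp [mul_comm, NNReal.smul_def]
end

section
/- Let X be a measurable space, λ a σ-finite measure on X, and h, q : X → [0,∞) measurable functions such that γ := λ.withDensity h is a finite measure with γ(X) > 0 and h(x) = 0 for λ-almost every x with q(x) = 0. Let {A_i}_{i∈I} be a finite measurable partition of X and suppose ω_i^q := ∫_{A_i} q dλ ∈ (0, ∞) for every i ∈ I. Define the truncated normalized proposal densities d_i(x) := q(x)·1_{A_i}(x) / ω_i^q, so that Q_i := λ.withDensity d_i is a probability measure. Then for every bounded measurable f : X → ℝ, the self-normalized stratified importance sampling identity holds: ( Σ_{i∈I} ∫_X ( h(x) f(x) / d_i(x) ) dQ_i(x) ) / ( Σ_{i∈I} ∫_X ( h(x) / d_i(x) ) dQ_i(x) ) = ( ∫_X f h dλ ) / (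 ∫_X h dλ ), i.e., it equals the expectation of f under the normalized target π := γ / γ(X). -/
/-! On the stratum `A i` the proposal density `d i` is `q / ω i`, so the importance weight
`h / d i` integrated against `Q i = d i • λ` returns `∫_{A i} h` exactly: the factor `d i`
cancels wherever it is nonzero, and where it vanishes inside `A i` so does `h`, up to a
`λ`-null set. Summing over the partition recovers `∫ h` and `∫ f h`, with no correction factors. -/

open MeasureTheory Filter
open scoped NNReal ENNReal

namespace MeasureTheory

variable {X : Type*} [MeasurableSpace X] (μ : Measure X)

theorem integral_div_withDensity_eq_setIntegral {d : X → ℝ≥0} (hd : Measurable d)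
    (g : X → ℝ) :
    ∫ x, g x / d x ∂(μ.withDensity fun x => (d x : ℝ≥0∞)) = ∫ x in {x | d x ≠ 0}, g x ∂μ := by
  rw [integral_withDensity_eq_integral_smul hd,
    ← integral_indicator (s := {x | d x ≠ 0}) (hd (measurableSet_singleton 0)).compl]
  congr with x
  by_cases hx : d x = 0
  · simp [hx]
  · simp [hx, NNReal.smul_def, mul_div_cancel₀]

theorem integrable_coe_of_isFiniteMeasure_withDensity {h : X → ℝ≥0} (hh : AEMeasurable h μ)
    [IsFiniteMeasure (μ.withDensity fun x => (h x : ℝ≥0∞))] :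
    Integrable (fun x => (h x : ℝ)) μ := by
  refine ⟨hh.coe_nnreal_real.aestronglyMeasurable, hasFiniteIntegral_iff_ofNNReal.2 ?_⟩
  simpa using measure_lt_top (μ.withDensity fun x => (h x : ℝ≥0∞)) Set.univ

theorem sum_setIntegral_of_partition {ι : Type*} [Fintype ι] {A : ι → Set X}
    (hA : ∀ i, MeasurableSet (A i)) (hdisj : Pairwise fun i j => Disjoint (A i) (A j))
    (hcover : (⋃ i, A i) = Set.univ) {g : X → ℝ} (hg : Integrable g μ) :
    ∑ i, ∫ x in A i, g x ∂μ = ∫ x, g x ∂μ := by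
  rw [← integral_iUnion_fintype hA hdisj fun _ => hg.integrableOn, hcover, Measure.restrict_univ]

end MeasureTheory

theorem stratified_self_normalized_importance_sampling_identity_general
    {X : Type*} [MeasurableSpace X]
    (lam : Measure X)
    (h q : X → ℝ≥0) (hh : Measurable h) (hq : Measurable q)
    (γ : Measure X) (hγdef : γ = lam.withDensity fun x => (h x : ℝ≥0∞))
    [IsFiniteMeasure γ]
    (hzero : ∀ᵐ x ∂lam, q x = 0 → h x = 0)
    {ι : Type*} [Fintype ι]
    (A : ι → Set X) (hA : ∀ i, MeasurableSet (A i))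
    (hdisj : Pairwise fun i j => Disjoint (A i) (A j))
    (hcover : (⋃ i, A i) = Set.univ)
    (ω : ι → ℝ≥0) (hωpos : ∀ i, 0 < ω i)
    (d : ι → X → ℝ≥0) (hd : ∀ i x, d i x = Set.indicator (A i) q x / ω i)
    (Q : ι → Measure X) (hQ : ∀ i, Q i = lam.withDensity fun x => (d i x : ℝ≥0∞))
    (f : X → ℝ) (hf : Measurable f) (hfb : ∃ C : ℝ, ∀ x, |f x| ≤ C) :
    (∑ i, ∫ x, (h x : ℝ) * f x / (d i x : ℝ) ∂(Q i)) /
      (∑ i, ∫ x, (h x : ℝ) / (d i x : ℝ) ∂(Q i))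
    = (∫ x, f x * (h x : ℝ) ∂lam) / (∫ x, (h x : ℝ) ∂lam) := by
  subst hγdef
  have hd_ne_zero : ∀ i x, d i x ≠ 0 ↔ x ∈ A i ∧ q x ≠ 0 := fun i x => by
    by_cases hx : x ∈ A i <;> simp [hd, hx, (hωpos i).ne']
  have hd_meas : ∀ i, Measurable (d i) := fun i => by
    simpa only [funext (hd i)] using (hq.indicator (hA i)).div_const _
  have stratum : ∀ (r : X → ℝ) i,
      ∫ x, h x * r x / d i x ∂(Q i) = ∫ x in A i, h x * r x ∂lam := fun r i => by
    rw [hQ i, integral_div_withDensity_eq_setIntegral lam (hd_meas i)]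
    refine (setIntegral_eq_of_subset_of_ae_sdiff_eq_zero (hA i).nullMeasurableSet
      (fun x hx => ((hd_ne_zero i x).1 hx).1) ?_).symm
    filter_upwards [hzero] with x hx ⟨hxA, hdx⟩
    have hqx : q x = 0 := by
      by_contra hqx
      exact hdx ((hd_ne_zero i x).2 ⟨hxA, hqx⟩)
    simp [hx hqx]
  have h_int := integrable_coe_of_isFiniteMeasure_withDensity lam hh.aemeasurable
  obtain ⟨C, hC⟩ := hfb
  have hf_int : Integrable (fun x => (h x : ℝ) * f x) lam :=
    h_int.mul_bdd hf.aestronglyMeasurable (Eventually.of_forall fun x => hC x)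
  have num : ∑ i, ∫ x, (h x : ℝ) * f x / d i x ∂(Q i) = ∫ x, f x * h x ∂lam := by
    simp_rw [stratum f, sum_setIntegral_of_partition lam hA hdisj hcover hf_int, mul_comm]
  have den : ∑ i, ∫ x, (h x : ℝ) / d i x ∂(Q i) = ∫ x, (h x : ℝ) ∂lam := by
    rw [← sum_setIntegral_of_partition lam hA hdisj hcover h_int]
    exact Finset.sum_congr rfl fun i _ => by simpa using stratum 1 i
  rw [num, den]

theorem stratified_self_normalized_importance_sampling_identity
    {X : Type*} [MeasurableSpace X]
    (lam : Measure X) [SigmaFinite lam]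
    (h q : X → ℝ≥0) (hh : Measurable h) (hq : Measurable q)
    (γ : Measure X) (hγdef : γ = lam.withDensity fun x => (h x : ℝ≥0∞))
    [IsFiniteMeasure γ] (hγpos : 0 < γ Set.univ)
    (hzero : ∀ᵐ x ∂lam, q x = 0 → h x = 0)
    {ι : Type*} [Fintype ι]
    (A : ι → Set X) (hA : ∀ i, MeasurableSet (A i))
    (hdisj : Pairwise fun i j => Disjoint (A i) (A j))
    (hcover : (⋃ i, A i) = Set.univ)
    (ω : ι → ℝ≥0) (hωpos : ∀ i, 0 < ω i)
    (hωdef : ∀ i, ∫⁻ x in A i, (q x : ℝ≥0∞) ∂lam = (ω i : ℝ≥0∞))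
    (d : ι → X → ℝ≥0) (hd : ∀ i x, d i x = Set.indicator (A i) q x / ω i)
    (Q : ι → Measure X) (hQ : ∀ i, Q i = lam.withDensity fun x => (d i x : ℝ≥0∞))
    (hQprob : ∀ i, IsProbabilityMeasure (Q i))
    (f : X → ℝ) (hf : Measurable f) (hfb : ∃ C : ℝ, ∀ x, |f x| ≤ C) :
    (∑ i, ∫ x, (h x : ℝ) * f x / (d i x : ℝ) ∂(Q i)) /
      (∑ i, ∫ x, (h x : ℝ) / (d i x : ℝ) ∂(Q i))
    = (∫ x, f x * (h x : ℝ) ∂lam) / (∫ x, (h x : ℝ) ∂lam) :=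
  stratified_self_normalized_importance_sampling_identity_general lam h q hh hq γ hγdef hzero A hA
    hdisj hcover ω hωpos d hd Q hQ f hf hfb
end

section
/- Let X be a measurable space, λ a σ-finite measure on X, and h, q : X → [0,∞) measurable with γ := λ.withDensity h a finite measure, γ(X) > 0, and h(x) = 0 for λ-almost every x with q(x) = 0. Let {A_i}_{i∈I} be a finite measurable partition of X with ω_i^q := ∫_{A_i} q dλ ∈ (0,∞) for each i, let d_i := q·1_{A_i}/ω_i^q, and let Q_i := λ.withDensity d_i (a probability measure). On a common probability space, for each i ∈ I let (x_i^n)_{n≥1} be an i.i.d. sequence with law Q_i, with the sequences independent across i. Let f : X → ℝ be bounded measurable, define the weight function w_i(x) := h(x)/d_i(x) (with the convention 0 where d_i = 0), and assume w_i(x_i^1) is integrable for each i. Then, almost surely, as N → ∞, ( Σ_{i∈I} (1/N) Σ_{n=1}^N w_i(x_i^n)·f(x_i^n) ) / ( Σ_{i∈I} (1/N) Σ_{n=1}^N w_i(x_i^n) ) converges to ( ∫_X f h dλ ) / ( ∫_X h dλ ). -/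
/-!
Within stratum `i` the samples are i.i.d. with law `Q i = d i • λ`, so by the strong law of
large numbers the `i`-th inner average of `w i · g` converges almost surely to
`∫ w i · g ∂Q i = ∫ d i · w i · g ∂λ`. Because `q` vanishes only where `h` does, `d i · w i`
is `λ`-a.e. the restriction of `h` to `A i`, so these limits add up over the partition to
`∫ g · h ∂λ`. Taking `g = f` and `g = 1` and dividing, with `∫ h ∂λ = γ X > 0`, gives the claim.
-/

open MeasureTheory ProbabilityTheory Filter Topology
open scoped NNReal ENNReal

section StrongLaw

variable {Ω X ι : Type*} {mΩ : MeasurableSpace Ω} {μ : Measure Ω} [MeasurableSpace X]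

theorem ae_tendsto_inv_mul_sum_comp {Q : Measure X} {x : ℕ → Ω → X}
    (hxm : ∀ n, Measurable (x n)) (hlaw : ∀ n, μ.map (x n) = Q)
    (hindep : Pairwise fun m n => IndepFun (x m) (x n) μ)
    {g : X → ℝ} (hg : Measurable g) (hgi : Integrable g Q) :
    ∀ᵐ ω ∂μ, Tendsto (fun N : ℕ => (N : ℝ)⁻¹ * ∑ n ∈ Finset.range N, g (x n ω))
      atTop (𝓝 (∫ y, g y ∂Q)) := by
  have hident : ∀ n, IdentDistrib (fun ω => g (x n ω)) (fun ω => g (x 0 ω)) μ μ := fun n =>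
    IdentDistrib.comp ⟨(hxm n).aemeasurable, (hxm 0).aemeasurable, by rw [hlaw, hlaw]⟩ hg
  have hint : Integrable (fun ω => g (x 0 ω)) μ := by
    rw [← hlaw 0] at hgi
    exact hgi.comp_measurable (hxm 0)
  have hmean : ∫ ω, g (x 0 ω) ∂μ = ∫ y, g y ∂Q := by
    rw [← hlaw 0, integral_map (hxm 0).aemeasurable hg.aestronglyMeasurable]
  filter_upwards [strong_law_ae_real (fun n ω => g (x n ω)) hint
    (fun m n hmn => (hindep hmn).comp hg hg) hident] with ω hω
  rw [← hmean]
  simpa only [div_eq_inv_mul] using hω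

theorem ae_tendsto_sum_inv_mul_sum_comp [Fintype ι] {Q : ι → Measure X} {x : ι → ℕ → Ω → X}
    (hxm : ∀ i n, Measurable (x i n)) (hlaw : ∀ i n, μ.map (x i n) = Q i)
    (hindep : iIndepFun (fun p : ι × ℕ => x p.1 p.2) μ)
    {g : ι → X → ℝ} (hg : ∀ i, Measurable (g i)) (hgi : ∀ i, Integrable (g i) (Q i)) :
    ∀ᵐ ω ∂μ, Tendsto (fun N : ℕ => ∑ i, (N : ℝ)⁻¹ * ∑ n ∈ Finset.range N, g i (x i n ω))
      atTop (𝓝 (∑ i, ∫ y, g i y ∂Q i)) := by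
  have hstratum := fun i => ae_tendsto_inv_mul_sum_comp (hxm i) (hlaw i)
    (fun m n hmn => hindep.indepFun (i := (i, m)) (j := (i, n)) (by simpa using hmn))
    (hg i) (hgi i)
  filter_upwards [ae_all_iff.2 hstratum] with ω hω
  exact tendsto_finsetSum _ fun i _ => hω i

end StrongLaw

section Density

variable {X : Type*} [MeasurableSpace X] {lam : Measure X} {h : X → ℝ≥0}

theorem withDensity_univ_eq_lintegral :
    (lam.withDensity fun y => (h y : ℝ≥0∞)) Set.univ = ∫⁻ y, (h y : ℝ≥0∞) ∂lam := by
  rw [withDensity_apply _ MeasurableSet.univ, Measure.restrict_univ]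

theorem integrable_coe_of_isFiniteMeasure_withDensity (hh : Measurable h)
    [IsFiniteMeasure (lam.withDensity fun y => (h y : ℝ≥0∞))] :
    Integrable (fun y => (h y : ℝ)) lam :=
  ⟨hh.coe_nnreal_real.aestronglyMeasurable, by
    simpa only [HasFiniteIntegral, NNReal.enorm_eq, ← withDensity_univ_eq_lintegral]
      using measure_lt_top _ _⟩

theorem integral_coe_pos_of_withDensity_univ_pos (hint : Integrable (fun y => (h y : ℝ)) lam)
    (hpos : 0 < (lam.withDensity fun y => (h y : ℝ≥0∞)) Set.univ) :
    0 < ∫ y, (h y : ℝ) ∂lam := by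
  rwa [withDensity_univ_eq_lintegral, lintegral_coe_eq_integral _ hint, ENNReal.ofReal_pos]
    at hpos

end Density

section ImportanceWeights

variable {X : Type*} [MeasurableSpace X] {lam : Measure X} {d w : X → ℝ≥0} {k : X → ℝ}

theorem smul_weight_mul_ae_eq (hdw : ∀ᵐ y ∂lam, (d y : ℝ) * w y = k y) (g : X → ℝ) :
    (fun y => d y • ((w y : ℝ) * g y)) =ᵐ[lam] fun y => g y * k y := by
  filter_upwards [hdw] with y hy
  rw [NNReal.smul_def, smul_eq_mul, ← mul_assoc, hy, mul_comm]

theorem integrable_withDensity_weight_mul (hd : Measurable d)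
    (hdw : ∀ᵐ y ∂lam, (d y : ℝ) * w y = k y) {g : X → ℝ}
    (hg : Integrable (fun y => g y * k y) lam) :
    Integrable (fun y => (w y : ℝ) * g y) (lam.withDensity fun y => d y) :=
  (integrable_withDensity_iff_integrable_smul hd).2 (hg.congr (smul_weight_mul_ae_eq hdw g).symm)

theorem integral_withDensity_weight_mul (hd : Measurable d)
    (hdw : ∀ᵐ y ∂lam, (d y : ℝ) * w y = k y) (g : X → ℝ) :
    ∫ y, (w y : ℝ) * g y ∂lam.withDensity (fun y => d y) = ∫ y, g y * k y ∂lam := by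
  rw [integral_withDensity_eq_integral_smul hd]
  exact integral_congr_ae (smul_weight_mul_ae_eq hdw g)

end ImportanceWeights

theorem indicator_div_mul_div_indicator_div {α : Type*} {s : Set α} {q h : α → ℝ≥0} {c : ℝ≥0}
    (hc : c ≠ 0) {y : α} (hy : q y = 0 → h y = 0) :
    s.indicator q y / c * (h y / (s.indicator q y / c)) = s.indicator h y := by
  by_cases hys : y ∈ s
  · simp only [Set.indicator_of_mem hys]
    exact mul_div_cancel_of_imp' fun hq => hy (by simpa [hc] using hq)
  · simp [Set.indicator_of_notMem hys]

section Stratification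

variable {X ι : Type*} [MeasurableSpace X] {lam : Measure X} {A : ι → Set X} {q h : X → ℝ≥0}
  {ω : ι → ℝ≥0} {d w : ι → X → ℝ≥0}

theorem ae_stratum_density_mul_weight (hzero : ∀ᵐ y ∂lam, q y = 0 → h y = 0)
    (hω : ∀ i, ω i ≠ 0) (hd : ∀ i y, d i y = (A i).indicator q y / ω i)
    (hw : ∀ i y, w i y = h y / d i y) (i : ι) :
    ∀ᵐ y ∂lam, (d i y : ℝ) * w i y = (A i).indicator (fun z => (h z : ℝ)) y := by
  filter_upwards [hzero] with y hy
  rw [← NNReal.coe_mul, hw, hd, indicator_div_mul_div_indicator_div (hω i) hy,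
    NNReal.coe_indicator]

theorem integral_withDensity_stratum_weight_mul (hA : ∀ i, MeasurableSet (A i))
    (hdm : ∀ i, Measurable (d i)) (hzero : ∀ᵐ y ∂lam, q y = 0 → h y = 0)
    (hω : ∀ i, ω i ≠ 0) (hd : ∀ i y, d i y = (A i).indicator q y / ω i)
    (hw : ∀ i y, w i y = h y / d i y) (g : X → ℝ) (i : ι) :
    ∫ y, (w i y : ℝ) * g y ∂lam.withDensity (fun y => d i y) = ∫ y in A i, g y * h y ∂lam := by
  rw [integral_withDensity_weight_mul (hdm i) (ae_stratum_density_mul_weight hzero hω hd hw i),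
    ← integral_indicator (hA i)]
  simp only [Set.indicator_mul_right]

theorem integrable_withDensity_stratum_weight_mul (hA : ∀ i, MeasurableSet (A i))
    (hdm : ∀ i, Measurable (d i)) (hzero : ∀ᵐ y ∂lam, q y = 0 → h y = 0)
    (hω : ∀ i, ω i ≠ 0) (hd : ∀ i y, d i y = (A i).indicator q y / ω i)
    (hw : ∀ i y, w i y = h y / d i y) {g : X → ℝ} (hg : Integrable (fun y => g y * h y) lam)
    (i : ι) : Integrable (fun y => (w i y : ℝ) * g y) (lam.withDensity fun y => d i y) := by
  refine integrable_withDensity_weight_mul (hdm i)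
    (ae_stratum_density_mul_weight hzero hω hd hw i) ?_
  simpa only [← Set.indicator_mul_right] using hg.indicator (hA i)

theorem sum_integral_withDensity_stratum_weight_mul [Fintype ι] (hA : ∀ i, MeasurableSet (A i))
    (hdisj : Pairwise fun i j => Disjoint (A i) (A j)) (hcover : ⋃ i, A i = Set.univ)
    (hdm : ∀ i, Measurable (d i)) (hzero : ∀ᵐ y ∂lam, q y = 0 → h y = 0)
    (hω : ∀ i, ω i ≠ 0) (hd : ∀ i y, d i y = (A i).indicator q y / ω i)
    (hw : ∀ i y, w i y = h y / d i y) {g : X → ℝ} (hg : Integrable (fun y => g y * h y) lam) :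
    ∑ i, ∫ y, (w i y : ℝ) * g y ∂lam.withDensity (fun y => d i y) = ∫ y, g y * h y ∂lam := by
  simp only [integral_withDensity_stratum_weight_mul hA hdm hzero hω hd hw]
  rw [← integral_iUnion_fintype hA hdisj fun i => hg.integrableOn, hcover, Measure.restrict_univ]

end Stratification

theorem stratified_self_normalized_importance_sampling_consistency_general
    {X : Type*} [MeasurableSpace X]
    (lam : Measure X)
    (h q : X → ℝ≥0) (hh : Measurable h) (hq : Measurable q)
    (γ : Measure X) (hγdef : γ = lam.withDensity fun x => (h x : ℝ≥0∞))
    [IsFiniteMeasure γ] (hγpos : 0 < γ Set.univ)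
    (hzero : ∀ᵐ x ∂lam, q x = 0 → h x = 0)
    {ι : Type*} [Fintype ι]
    (A : ι → Set X) (hA : ∀ i, MeasurableSet (A i))
    (hdisj : Pairwise fun i j => Disjoint (A i) (A j))
    (hcover : (⋃ i, A i) = Set.univ)
    (ω : ι → ℝ≥0) (hωpos : ∀ i, 0 < ω i)
    (d : ι → X → ℝ≥0) (hd : ∀ i x, d i x = Set.indicator (A i) q x / ω i)
    (Q : ι → Measure X) (hQ : ∀ i, Q i = lam.withDensity fun x => (d i x : ℝ≥0∞))
    {Ω : Type*} [MeasureSpace Ω]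
    (x : ι → ℕ → Ω → X) (hxm : ∀ i n, Measurable (x i n))
    (hlaw : ∀ i n, Measure.map (x i n) ℙ = Q i)
    (hindep : iIndepFun (fun p : ι × ℕ => x p.1 p.2) ℙ)
    (f : X → ℝ) (hf : Measurable f) (hfb : ∃ C : ℝ, ∀ y, |f y| ≤ C)
    (w : ι → X → ℝ≥0) (hw : ∀ i y, w i y = h y / d i y) :
    ∀ᵐ ωo ∂ℙ, Tendsto (fun N : ℕ =>
        (∑ i, (N : ℝ)⁻¹ * ∑ n ∈ Finset.range N, (w i (x i n ωo) : ℝ) * f (x i n ωo)) /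
          (∑ i, (N : ℝ)⁻¹ * ∑ n ∈ Finset.range N, (w i (x i n ωo) : ℝ)))
      atTop (𝓝 ((∫ y, f y * (h y : ℝ) ∂lam) / ∫ y, (h y : ℝ) ∂lam)) := by
  subst hγdef
  obtain rfl : Q = fun i => lam.withDensity fun x => (d i x : ℝ≥0∞) := funext hQ
  obtain ⟨C, hC⟩ := hfb
  have hh_int := integrable_coe_of_isFiniteMeasure_withDensity (lam := lam) hh
  have hh_int' : Integrable (fun y => (1 : X → ℝ) y * h y) lam := by simpa using hh_int
  have hfh_int : Integrable (fun y => f y * h y) lam :=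
    hh_int.bdd_mul hf.aestronglyMeasurable (c := C) (ae_of_all _ fun y => by simpa using hC y)
  have hdm : ∀ i, Measurable (d i) := fun i => by
    simpa only [← funext (hd i)] using (hq.indicator (hA i)).div_const (ω i)
  have hwm : ∀ i, Measurable fun y => (w i y : ℝ) := fun i => by
    rw [show w i = h / d i from funext (hw i)]
    exact (hh.div (hdm i)).coe_nnreal_real
  have hω : ∀ i, ω i ≠ 0 := fun i => (hωpos i).ne'
  have hnum := sum_integral_withDensity_stratum_weight_mul hA hdisj hcover hdm hzero hω hd hw
    hfh_int
  have hden := sum_integral_withDensity_stratum_weight_mul hA hdisj hcover hdm hzero hω hd hw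
    hh_int'
  simp only [Pi.one_apply, mul_one, one_mul] at hden
  filter_upwards [ae_tendsto_sum_inv_mul_sum_comp hxm hlaw hindep (fun i => (hwm i).mul hf)
      (integrable_withDensity_stratum_weight_mul hA hdm hzero hω hd hw hfh_int),
    ae_tendsto_sum_inv_mul_sum_comp hxm hlaw hindep hwm fun i => by
      simpa using integrable_withDensity_stratum_weight_mul hA hdm hzero hω hd hw hh_int' i]
    with ωo hF hW
  rw [← hnum, ← hden]
  exact hF.div hW (hden ▸ (integral_coe_pos_of_withDensity_univ_pos hh_int hγpos).ne')

theorem stratified_self_normalized_importance_sampling_consistency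
    {X : Type*} [MeasurableSpace X]
    (lam : Measure X) [SigmaFinite lam]
    (h q : X → ℝ≥0) (hh : Measurable h) (hq : Measurable q)
    (γ : Measure X) (hγdef : γ = lam.withDensity fun x => (h x : ℝ≥0∞))
    [IsFiniteMeasure γ] (hγpos : 0 < γ Set.univ)
    (hzero : ∀ᵐ x ∂lam, q x = 0 → h x = 0)
    {ι : Type*} [Fintype ι]
    (A : ι → Set X) (hA : ∀ i, MeasurableSet (A i))
    (hdisj : Pairwise fun i j => Disjoint (A i) (A j))
    (hcover : (⋃ i, A i) = Set.univ)
    (ω : ι → ℝ≥0) (hωpos : ∀ i, 0 < ω i)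
    (hωdef : ∀ i, ∫⁻ x in A i, (q x : ℝ≥0∞) ∂lam = (ω i : ℝ≥0∞))
    (d : ι → X → ℝ≥0) (hd : ∀ i x, d i x = Set.indicator (A i) q x / ω i)
    (Q : ι → Measure X) (hQ : ∀ i, Q i = lam.withDensity fun x => (d i x : ℝ≥0∞))
    (hQprob : ∀ i, IsProbabilityMeasure (Q i))
    {Ω : Type*} [MeasureSpace Ω] [IsProbabilityMeasure (ℙ : Measure Ω)]
    (x : ι → ℕ → Ω → X) (hxm : ∀ i n, Measurable (x i n))
    (hlaw : ∀ i n, Measure.map (x i n) ℙ = Q i)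
    (hindep : iIndepFun (fun p : ι × ℕ => x p.1 p.2) ℙ)
    (f : X → ℝ) (hf : Measurable f) (hfb : ∃ C : ℝ, ∀ y, |f y| ≤ C)
    (w : ι → X → ℝ≥0) (hw : ∀ i y, w i y = h y / d i y)
    (hint : ∀ i, Integrable (fun ωo => (w i (x i 0 ωo) : ℝ)) ℙ) :
    ∀ᵐ ωo ∂ℙ, Tendsto (fun N : ℕ =>
        (∑ i, (N : ℝ)⁻¹ * ∑ n ∈ Finset.range N, (w i (x i n ωo) : ℝ) * f (x i n ωo)) /
          (∑ i, (N : ℝ)⁻¹ * ∑ n ∈ Finset.range N, (w i (x i n ωo) : ℝ)))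
      atTop (𝓝 ((∫ y, f y * (h y : ℝ) ∂lam) / ∫ y, (h y : ℝ) ∂lam)) :=
  stratified_self_normalized_importance_sampling_consistency_general lam h q hh hq γ hγdef hγpos
    hzero A hA hdisj hcover ω hωpos d hd Q hQ x hxm hlaw hindep f hf hfb w hw
end
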